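/- The conditional density of (U',V') given (U,V), where (U',V',W') = φ(U,V,W) with W ∼ 1/Beta(γ,β) - 1 independent of (U,V), is given by P((U',V')|(U,V)) = [Γ(γ+β)/(Γ(γ)Γ(β))] · V·(-(U-VU')/(VU'+V))^β · ((U+V)/(VU'+V))^γ / (VU'-U) · δ(V' - U'V/U), supported on U > 0, V > 1. -/

import Mathlib

open MeasureTheory ProbabilityTheory Real

noncomputable def invBetaShiftDensity (a b : ℝ) (w : ℝ) : ℝ :=
  if 0 < w then
    Gamma (a + b) / (Gamma a * Gamma b) * (1 - 1 / (w + 1)) ^ (b - 1) * (1 / (w + 1)) ^ (a + 1)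
  else 0

noncomputable def phi1 (U V W : ℝ) : ℝ := W + (W + 1) * U / V

noncomputable def phi2 (U V W : ℝ) : ℝ := W * V / U + W + 1

open scoped ENNReal

/-! For fixed `(u, v)`, `U' = phi1 u v W` is the affine function `((u + v) / v) W + u / v` of `W`,
so its law is the image of the law of `W` under an affine change of variables: the density at
`x` is `v / (u + v)` times the density of `W` at `(v x - u) / (u + v)`. The δ-part is the identity
`phi2 u v w = phi1 u v w * v / u`, valid for every `w`. -/

theorem MeasurableEquiv.map_withDensity {α β : Type*} [MeasurableSpace α] [MeasurableSpace β]
    (e : α ≃ᵐ β) (μ : Measure α) (f : α → ℝ≥0∞) :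
    (μ.withDensity f).map e = (μ.map e).withDensity (f ∘ e.symm) := by
  ext s hs
  rw [e.map_apply, withDensity_apply _ (e.measurable hs), withDensity_apply _ hs,
    e.restrict_map, lintegral_map_equiv]
  simp

theorem Real.map_volume_mul_add {a : ℝ} (ha : a ≠ 0) (b : ℝ) :
    volume.map (fun x => a * x + b) = ENNReal.ofReal |a⁻¹| • volume := by
  rw [show (fun x => a * x + b) = (· + b) ∘ (a * ·) from rfl,
    ← Measure.map_map (measurable_add_const b) (measurable_const_mul a),
    Real.map_volume_mul_left ha, Measure.map_smul, map_add_right_eq_self]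

theorem Real.map_withDensity_mul_add {a : ℝ} (ha : a ≠ 0) (b : ℝ) (f : ℝ → ℝ≥0∞) :
    (volume.withDensity f).map (fun x => a * x + b) =
      volume.withDensity fun y => ENNReal.ofReal |a⁻¹| * f (a⁻¹ * (y - b)) := by
  let e : ℝ ≃ᵐ ℝ := ((Homeomorph.mulLeft₀ a ha).trans (Homeomorph.addRight b)).toMeasurableEquiv
  have he : ⇑e = fun x => a * x + b := rfl
  rw [← he, e.map_withDensity, he, Real.map_volume_mul_add ha, withDensity_smul_measure,
    ← withDensity_smul' _ _ ENNReal.ofReal_ne_top]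
  rfl

theorem phi1_eq_mul_add {u v : ℝ} (hv : v ≠ 0) (w : ℝ) :
    phi1 u v w = (u + v) / v * w + u / v := by
  rw [phi1]; field_simp; ring

theorem phi2_eq_phi1_mul_div {u v : ℝ} (hu : u ≠ 0) (hv : v ≠ 0) (w : ℝ) :
    phi2 u v w = phi1 u v w * v / u := by
  rw [phi1, phi2]; field_simp; ring

theorem invBetaShiftDensity_of_pos (a b : ℝ) {w : ℝ} (hw : 0 < w) :
    invBetaShiftDensity a b w =
      Gamma (a + b) / (Gamma a * Gamma b) * ((w / (w + 1)) ^ b * (1 / (w + 1)) ^ a) / w := by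
  have hw1 : 0 < w + 1 := by linarith
  have hfrac : 1 - 1 / (w + 1) = w / (w + 1) := by field_simp; ring
  rw [invBetaShiftDensity, if_pos hw, hfrac, rpow_sub_one (by positivity),
    rpow_add_one (by positivity)]
  field_simp

theorem abs_inv_mul_invBetaShiftDensity_eq {u v : ℝ} (huv : 0 < u + v) (hv : 0 < v)
    (γ β x : ℝ) :
    |((u + v) / v)⁻¹| * invBetaShiftDensity γ β (((u + v) / v)⁻¹ * (x - u / v)) =
      if 0 < v * x - u then
        Gamma (γ + β) / (Gamma γ * Gamma β) *
          (v * (-((u - v * x) / (v * x + v))) ^ β * ((u + v) / (v * x + v)) ^ γ) / (v * x - u)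
      else 0 := by
  have hw : ((u + v) / v)⁻¹ * (x - u / v) = (v * x - u) / (u + v) := by field_simp
  rw [abs_of_pos (by positivity), hw]
  split_ifs with hx
  · have hx1 : 0 < v * x + v := by linarith
    have hw1 : (v * x - u) / (u + v) + 1 = (v * x + v) / (u + v) := by field_simp; ring
    have h1 : (v * x - u) / (u + v) / ((v * x + v) / (u + v)) = -((u - v * x) / (v * x + v)) := by
      field_simp; ring
    have h2 : 1 / ((v * x + v) / (u + v)) = (u + v) / (v * x + v) := one_div_div _ _
    rw [invBetaShiftDensity_of_pos _ _ (div_pos hx huv), hw1, h1, h2]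
    field_simp
  · rw [invBetaShiftDensity, if_neg (by rwa [div_pos_iff_of_pos_right huv]), mul_zero]

theorem phiIB_conditional_density_general
    {Ω : Type*} [MeasurableSpace Ω] (P : Measure Ω)
    (γ β : ℝ)
    (u v : ℝ) (hu : 0 < u) (hv : 1 < v)
    (W : Ω → ℝ) (hW : Measurable W)
    (hlawW : P.map W =
      volume.withDensity fun x => ENNReal.ofReal (invBetaShiftDensity γ β x)) :
    P.map (fun ω => phi1 u v (W ω)) =
      (volume.withDensity fun x => ENNReal.ofReal
        (if 0 < v * x - u then
          Gamma (γ + β) / (Gamma γ * Gamma β) *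
            (v * (-((u - v * x) / (v * x + v))) ^ β * ((u + v) / (v * x + v)) ^ γ) / (v * x - u)
         else 0)) ∧
    ∀ᵐ ω ∂P, phi2 u v (W ω) = phi1 u v (W ω) * v / u := by
  have hv0 : 0 < v := one_pos.trans hv
  refine ⟨?_, ae_of_all _ fun ω => phi2_eq_phi1_mul_div hu.ne' hv0.ne' (W ω)⟩
  have hphi1 : (fun ω => phi1 u v (W ω)) = (fun w => (u + v) / v * w + u / v) ∘ W :=
    funext fun ω => phi1_eq_mul_add hv0.ne' (W ω)
  rw [hphi1, ← Measure.map_map (by fun_prop) hW, hlawW,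
    Real.map_withDensity_mul_add (by positivity)]
  congr 1 with x
  rw [← ENNReal.ofReal_mul (abs_nonneg _), abs_inv_mul_invBetaShiftDensity_eq (by positivity) hv0]

/-- Conditional density of `(U',V')` given `(U,V) = (u,v)` for the Inverse-Beta map,
where `W ∼ 1/Beta(γ,β) - 1` is independent of `(U,V)`: the law of `U'` has density
`Γ(γ+β)/(Γ(γ)Γ(β)) · V·(-(u-v·U')/(v·U'+v))^β · ((u+v)/(v·U'+v))^γ / (v·U'-u)` (supported on
`v·U' > u`), and almost surely `V' = U'·v/u` (the δ-function part). Hypotheses `u > 0, v > 1`. -/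
theorem phiIB_conditional_density
    {Ω : Type*} [MeasurableSpace Ω] (P : Measure Ω) [IsProbabilityMeasure P]
    (γ β : ℝ) (hγ : 0 < γ) (hβ : 0 < β)
    (u v : ℝ) (hu : 0 < u) (hv : 1 < v)
    (W : Ω → ℝ) (hW : Measurable W)
    (hlawW : P.map W =
      volume.withDensity fun x => ENNReal.ofReal (invBetaShiftDensity γ β x)) :
    P.map (fun ω => phi1 u v (W ω)) =
      (volume.withDensity fun x => ENNReal.ofReal
        (if 0 < v * x - u then
          Gamma (γ + β) / (Gamma γ * Gamma β) *
            (v * (-((u - v * x) / (v * x + v))) ^ β * ((u + v) / (v * x + v)) ^ γ) / (v * x - u)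
         else 0)) ∧
    ∀ᵐ ω ∂P, phi2 u v (W ω) = phi1 u v (W ω) * v / u :=
  phiIB_conditional_density_general P γ β u v hu hv W hW hlawW
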